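/- arXiv:2107.14176 — 5 statements merged into one kernel-verified Lean document; each statement's English description precedes it below -/
import Mathlib

section
/- With notation and standing hypotheses as in the context (using (q-we), (H2) and (H3), and two-out-of-three for W_C), the extension coreflector Q̄ := G ⋙ Q ⋙ F : D ⥤ D is homotopical: for every morphism f of D with f ∈ W_D, one has Q̄.map f ∈ W_D. -/
open CategoryTheory

/-- The extension coreflector `Q̄ := G ⋙ Q ⋙ F` is homotopical. -/
theorem extension_coreflector_homotopical {C D : Type*} [Category C] [Category D]
    {F : C ⥤ D} {G : D ⥤ C} (adj : F ⊣ G)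
    (Q : C ⥤ C) (q : Q ⟶ 𝟭 C)
    (W_C : MorphismProperty C) (W_D : MorphismProperty D)
    [W_C.HasTwoOutOfThreeProperty]
    (hq : ∀ X : C, W_C (q.app X))
    (H2 : ∀ {X Y : C} (g : Q.obj X ⟶ Q.obj Y), W_C g → W_D (F.map g))
    (H3 : ∀ {X Y : D} (f : X ⟶ Y), W_D f → W_C (G.map f))
    {A B : D} (f : A ⟶ B) (hf : W_D f) :
    W_D ((G ⋙ Q ⋙ F).map f) := by
  apply H2
  apply W_C.of_postcomp _ _ (hq (G.obj B))
  rw [q.naturality (G.map f)]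
  exact W_C.comp_mem _ _ (hq (G.obj A)) (H3 f hf)
end

section
/- With notation and standing hypotheses as in the context (using (q-we), (H1), (H2), and two-out-of-three for W_C and W_D), for every object A of D the component of the augmentation at Q̄ A lies in the weak equivalences: ε_{Q̄ A} ∈ W_D, where Q̄ := G ⋙ Q ⋙ F. -/
/-!
Write `X := Q (G A)`, so that the claim concerns `ε_{F X}`. Naturality of `q` and the triangle
identity give `ε_{F X} ∘ F (Q η_X) = F (q_X)`. Both `F (q_X)` and `F (Q η_X)` are images of weak
equivalences between cofibrant objects; for `Q η_X` this is because `q_X` and `η_X` are weak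
equivalences. Two-out-of-three in `D` finishes the argument.
-/

open CategoryTheory

namespace CategoryTheory

variable {C D : Type*} [Category C] [Category D]

theorem MorphismProperty.map_mem_of_natTrans_to_id (W : MorphismProperty C)
    [W.HasTwoOutOfThreeProperty] {Q : C ⥤ C} (q : Q ⟶ 𝟭 C) (hq : ∀ X, W (q.app X))
    {X Y : C} {f : X ⟶ Y} (hf : W f) : W (Q.map f) := by
  refine W.of_postcomp _ (q.app Y) (hq Y) ?_
  rw [q.naturality f]
  exact W.comp_mem _ _ (hq X) hf

namespace Adjunction

variable {F : C ⥤ D} {G : D ⥤ C} (adj : F ⊣ G) {Q : C ⥤ C} (q : Q ⟶ 𝟭 C)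

@[simps]
def augmentation : G ⋙ Q ⋙ F ⟶ 𝟭 D where
  app A := F.map (q.app (G.obj A)) ≫ adj.counit.app A
  naturality A B f := by
    have hq := q.naturality (G.map f)
    simp only [Functor.comp_obj, Functor.id_obj, Functor.comp_map, Functor.id_map] at hq ⊢
    rw [← F.map_comp_assoc, hq, F.map_comp_assoc, adj.counit_naturality, Category.assoc]

theorem map_map_unit_comp_augmentation_app (X : C) :
    F.map (Q.map (adj.unit.app X)) ≫ (adj.augmentation q).app (F.obj X) = F.map (q.app X) := by
  have hq : Q.map (adj.unit.app X) ≫ q.app (G.obj (F.obj X)) = q.app X ≫ adj.unit.app X :=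
    q.naturality _
  rw [augmentation_app, ← F.map_comp_assoc, hq, F.map_comp_assoc, adj.left_triangle_components X]
  exact Category.comp_id _

end Adjunction

end CategoryTheory

/-- The component of the augmentation `ε` at `Q̄ A` is a weak equivalence. -/
theorem augmentation_at_coreflector_is_we {C D : Type*} [Category C] [Category D]
    {F : C ⥤ D} {G : D ⥤ C} (adj : F ⊣ G)
    (Q : C ⥤ C) (q : Q ⟶ 𝟭 C)
    (W_C : MorphismProperty C) (W_D : MorphismProperty D)
    [W_C.HasTwoOutOfThreeProperty] [W_D.HasTwoOutOfThreeProperty]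
    (hq : ∀ X : C, W_C (q.app X))
    (H1 : ∀ X : C, W_C (adj.unit.app (Q.obj X)))
    (H2 : ∀ {X Y : C} (g : Q.obj X ⟶ Q.obj Y), W_C g → W_D (F.map g))
    (A : D) :
    W_D (F.map (q.app (G.obj (F.obj (Q.obj (G.obj A))))) ≫
      adj.counit.app (F.obj (Q.obj (G.obj A)))) := by
  set X := Q.obj (G.obj A)
  have hFQη : W_D (F.map (Q.map (adj.unit.app X))) :=
    H2 _ (W_C.map_mem_of_natTrans_to_id q hq (H1 _))
  have hFq : W_D (F.map (q.app X)) := H2 _ (hq X)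
  rw [← adj.map_map_unit_comp_augmentation_app q X] at hFq
  exact W_D.of_precomp _ _ hFQη hFq
end

section
/- With notation and standing hypotheses as in the context (using (q-we), (H1), (H2), and two-out-of-three for W_C and W_D), for every object A of D one has Q̄.map(ε_A) ∈ W_D, where Q̄ := G ⋙ Q ⋙ F; that is, the coreflector applied to the augmentation is a natural weak equivalence. -/
open CategoryTheory

/-- The coreflector applied to the augmentation is a weak equivalence:
`Q̄(ε_A) ∈ W_D`. -/
theorem coreflector_map_augmentation_is_we {C D : Type*} [Category C] [Category D]
    {F : C ⥤ D} {G : D ⥤ C} (adj : F ⊣ G)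
    (Q : C ⥤ C) (q : Q ⟶ 𝟭 C)
    (W_C : MorphismProperty C) (W_D : MorphismProperty D)
    [W_C.HasTwoOutOfThreeProperty] [W_D.HasTwoOutOfThreeProperty]
    (hq : ∀ X : C, W_C (q.app X))
    (H1 : ∀ X : C, W_C (adj.unit.app (Q.obj X)))
    (H2 : ∀ {X Y : C} (g : Q.obj X ⟶ Q.obj Y), W_C g → W_D (F.map g))
    (A : D) :
    W_D ((G ⋙ Q ⋙ F).map (F.map (q.app (G.obj A)) ≫ adj.counit.app A)) := by
  set f : G.obj (F.obj (Q.obj (G.obj A))) ⟶ G.obj A :=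
    G.map (F.map (q.app (G.obj A)) ≫ adj.counit.app A) with hf
  have hnatu := adj.unit.naturality (q.app (G.obj A))
  simp only [Functor.id_obj, Functor.id_map, Functor.comp_obj, Functor.comp_map] at hnatu
  have hcomp : adj.unit.app (Q.obj (G.obj A)) ≫ f = q.app (G.obj A) := by
    rw [hf, G.map_comp, ← Category.assoc, ← hnatu,
      Category.assoc, adj.right_triangle_components, Category.comp_id]
  have hfW : W_C f :=
    W_C.of_precomp (adj.unit.app (Q.obj (G.obj A))) f (H1 (G.obj A))
      (by rw [hcomp]; exact hq (G.obj A))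
  have hQf : W_C (Q.map f) := by
    have hnat : Q.map f ≫ q.app (G.obj A) = q.app _ ≫ f := q.naturality f
    apply W_C.of_postcomp (Q.map f) (q.app (G.obj A)) (hq (G.obj A))
    rw [hnat]; exact W_C.comp_mem _ _ (hq _) hfW
  exact H2 (Q.map f) hQf
end

section
/- With notation and standing hypotheses as in the context (using (q-we), (H1), (H2), (H3), and two-out-of-three for W_C and W_D), for every morphism f : A ⟶ B of D the following are equivalent: (i) Q̄.map f ∈ W_D, where Q̄ := G ⋙ Q ⋙ F; (ii) G.map f ∈ W_C. In other words, the class of morphisms inverted by the coreflector Q̄ coincides with the class of 'extension weak equivalences', i.e. the morphisms sent to weak equivalences by the right adjoint G. -/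
open CategoryTheory

/-- The class of morphisms inverted by the coreflector `Q̄ = G ⋙ Q ⋙ F` coincides with
the class of extension weak equivalences, i.e. morphisms sent to `W_C` by `G`. -/
theorem coreflector_we_iff_extension_we {C D : Type*} [Category C] [Category D]
    {F : C ⥤ D} {G : D ⥤ C} (adj : F ⊣ G)
    (Q : C ⥤ C) (q : Q ⟶ 𝟭 C)
    (W_C : MorphismProperty C) (W_D : MorphismProperty D)
    [W_C.HasTwoOutOfThreeProperty] [W_D.HasTwoOutOfThreeProperty]
    (hq : ∀ X : C, W_C (q.app X))
    (H1 : ∀ X : C, W_C (adj.unit.app (Q.obj X)))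
    (H2 : ∀ {X Y : C} (g : Q.obj X ⟶ Q.obj Y), W_C g → W_D (F.map g))
    (H3 : ∀ {X Y : D} (f : X ⟶ Y), W_D f → W_C (G.map f))
    {A B : D} (f : A ⟶ B) :
    W_D ((G ⋙ Q ⋙ F).map f) ↔ W_C (G.map f) := by
  have hnat : Q.map (G.map f) ≫ q.app (G.obj B) = q.app (G.obj A) ≫ G.map f :=
    q.naturality (G.map f)
  constructor
  · intro h
    -- apply G, then unit naturality
    have h1 : W_C (G.map (F.map (Q.map (G.map f)))) := H3 _ h
    have hη : adj.unit.app (Q.obj (G.obj A)) ≫ G.map (F.map (Q.map (G.map f))) =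
        Q.map (G.map f) ≫ adj.unit.app (Q.obj (G.obj B)) :=
      (adj.unit.naturality (Q.map (G.map f))).symm
    have h2 : W_C (Q.map (G.map f) ≫ adj.unit.app (Q.obj (G.obj B))) := by
      rw [← hη]; exact W_C.comp_mem _ _ (H1 _) h1
    have h3 : W_C (Q.map (G.map f)) := W_C.of_postcomp _ _ (H1 _) h2
    have h4 : W_C (q.app (G.obj A) ≫ G.map f) := by
      rw [← hnat]; exact W_C.comp_mem _ _ h3 (hq _)
    exact W_C.of_precomp _ _ (hq _) h4
  · intro h
    have h1 : W_C (Q.map (G.map f) ≫ q.app (G.obj B)) := by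
      rw [hnat]; exact W_C.comp_mem _ _ (hq _) h
    have h2 : W_C (Q.map (G.map f)) := W_C.of_postcomp _ _ (hq _) h1
    exact H2 _ h2
end

section
/- Let k be a field. Given a pushout square in ChainComplex (ModuleCat k) ℤ with f : A ⟶ B a quasi-isomorphism and g : A ⟶ C a monomorphism, the cobase change pushout.inr : C ⟶ B ⊔_A C of f along g is a quasi-isomorphism. In other words, quasi-isomorphisms of chain complexes of k-vector spaces are stable under pushout along monomorphisms. -/
/-!
A pushout square `f, g, inl, inr` with `g` mono gives a short exact sequence
`0 → A → B ⊞ C → P → 0`, with maps `(f, -g)` and `(inl, inr)`. The trivial pushout of `𝟙 A` along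
`g` gives the split sequence `0 → A → A ⊞ C → C → 0`, and the two squares are related by a map of
short exact sequences with components `𝟙 A`, `f ⊞ 𝟙 C` and `inr`. The first two are
quasi-isomorphisms (homology is additive), so the five lemma on the long exact homology sequences
makes `inr` one as well.
-/

open CategoryTheory CategoryTheory.Limits

namespace CategoryTheory.Functor

variable {𝒞 𝒟 : Type*} [Category 𝒞] [Category 𝒟] [Preadditive 𝒞] [Preadditive 𝒟]
  [HasBinaryBiproducts 𝒞] (F : 𝒞 ⥤ 𝒟) [F.Additive]

lemma map_biprod_total (X Y : 𝒞) :
    F.map biprod.fst ≫ F.map biprod.inl + F.map biprod.snd ≫ F.map biprod.inr =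
      𝟙 (F.obj (X ⊞ Y)) := by
  rw [← F.map_comp, ← F.map_comp, ← F.map_add, biprod.total, F.map_id]

instance isIso_map_biprod_map {X Y X' Y' : 𝒞} (f : X ⟶ Y) (g : X' ⟶ Y')
    [IsIso (F.map f)] [IsIso (F.map g)] : IsIso (F.map (biprod.map f g)) := by
  refine ⟨F.map biprod.fst ≫ CategoryTheory.inv (F.map f) ≫ F.map biprod.inl +
      F.map biprod.snd ≫ CategoryTheory.inv (F.map g) ≫ F.map biprod.inr, ?_, ?_⟩
  · simp only [Preadditive.comp_add, ← F.map_comp_assoc, biprod.map_fst, biprod.map_snd]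
    simp [map_biprod_total]
  · simp only [Preadditive.add_comp, Category.assoc, ← F.map_comp, biprod.inl_map,
      biprod.inr_map]
    simp [map_biprod_total]

end CategoryTheory.Functor

namespace CategoryTheory.IsPushout

variable {𝒜 : Type*} [Category 𝒜] [Abelian 𝒜] {X₁ X₂ X₃ X₄ : 𝒜}
  {f : X₁ ⟶ X₂} {g : X₁ ⟶ X₃} {inl : X₂ ⟶ X₄} {inr : X₃ ⟶ X₄}

lemma shortExact_shortComplex (h : IsPushout f g inl inr) [Mono g] :
    h.shortComplex.ShortExact where
  exact := h.exact_shortComplex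
  mono_f := by
    have : Mono (h.shortComplex.f ≫ biprod.snd) := by
      simpa [CommSq.shortComplex] using (inferInstance : Mono (-g))
    exact mono_of_mono _ biprod.snd
  epi_g := h.epi_shortComplex_g

end CategoryTheory.IsPushout

namespace HomologicalComplex

variable {𝒜 ι : Type*} [Category 𝒜] [Abelian 𝒜] {c : ComplexShape ι}

instance quasiIso_biprod_map {K L K' L' : HomologicalComplex 𝒜 c} (f : K ⟶ L) (g : K' ⟶ L')
    [QuasiIso f] [QuasiIso g] : QuasiIso (biprod.map f g) := by
  refine (quasiIso_iff _).2 fun i ↦ (quasiIsoAt_iff_isIso_homologyMap _ i).2 ?_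
  have : IsIso ((homologyFunctor 𝒜 c i).map f) := inferInstanceAs (IsIso (homologyMap f i))
  have : IsIso ((homologyFunctor 𝒜 c i).map g) := inferInstanceAs (IsIso (homologyMap g i))
  exact (homologyFunctor 𝒜 c i).isIso_map_biprod_map f g

lemma quasiIso_inr_of_isPushout {K L M P : HomologicalComplex 𝒜 c} {f : K ⟶ L} {g : K ⟶ M}
    {inl : L ⟶ P} {inr : M ⟶ P} (h : IsPushout f g inl inr) [QuasiIso f] [Mono g] :
    QuasiIso inr := by
  let φ : (IsPushout.id_horiz g).shortComplex ⟶ h.shortComplex :=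
    { τ₁ := 𝟙 K
      τ₂ := biprod.map f (𝟙 M)
      τ₃ := inr
      comm₁₂ := by apply biprod.hom_ext <;> simp [CommSq.shortComplex]
      comm₂₃ := by apply biprod.hom_ext' <;> simp [CommSq.shortComplex, h.w] }
  exact HomologySequence.quasiIso_τ₃ φ (IsPushout.id_horiz g).shortExact_shortComplex
    h.shortExact_shortComplex (inferInstanceAs (QuasiIso (𝟙 K)))
    (inferInstanceAs (QuasiIso (biprod.map f (𝟙 M))))

end HomologicalComplex

/-- Quasi-isomorphisms of chain complexes of `k`-vector spaces are stable under
pushout along monomorphisms. -/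
theorem quasiIso_pushout_inr_of_mono (k : Type*) [Field k]
    {A B C : ChainComplex (ModuleCat k) ℤ}
    (f : A ⟶ B) (g : A ⟶ C) [QuasiIso f] [Mono g] :
    QuasiIso (pushout.inr f g) :=
  HomologicalComplex.quasiIso_inr_of_isPushout (IsPushout.of_hasPushout f g)
end
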